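/- Let Λ ⊂ ℂ² be a lattice spanned by vectors λ₁,τ, …, λ₄,τ where λ₁,…,λ₄ ∈ M₂(ℝ) are ℝ-linearly independent and λ_τ = λ·(τ,1)ᵗ for fixed τ ∈ ℍ. Suppose f = (f₁, f₂, f₃): ℂ² → ℂ³ is holomorphic and satisfies f(z + λ_τ) = ρ(λ) f(z) for all λ ∈ Λ' (the corresponding subgroup of M₂(ℝ)), where ρ(λ) is the 3×3 matrix ((1,0,0),(0,1,0),(−λ₁₁, −λ₂₁, 1)). Then f₁ = f₂ = 0 and f₃ is constant. -/

import Mathlib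

/-!
A continuous function on `ℂ²` that is periodic under a full lattice is bounded, since it is
determined by its values on the compact closure of a fundamental domain; by Liouville, a periodic
entire function is constant. So `f₁, f₂` are constants `c₁, c₂`. For every `u`, the function
`z ↦ f₃ (z + u) - f₃ z` is then periodic, hence constant, so `f₃` is additive up to a constant,
i.e. `f₃ = A + f₃ 0` with `A = fderiv ℂ f₃ 0` linear over `ℂ`. The equivariance now reads
`A λ_τ = -λ₁₁ c₁ - λ₂₁ c₂`, first for `λ = λᵢ` and then, both sides being `ℝ`-linear in `λ`, for
every real matrix. The matrix unit `E₁₂` gives `A (1, 0) = 0`, hence `A (τ, 0) = τ • A (1, 0) = 0`,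
while `E₁₁` gives `A (τ, 0) = -c₁`. So `c₁ = 0`; likewise `c₂ = 0`, and `A = 0`.
-/

open Set Bornology

theorem isBounded_range_of_periodic {E F ι : Type*} [NormedAddCommGroup E] [NormedSpace ℝ E]
    [PseudoMetricSpace F] [Finite ι] (b : Module.Basis ι ℝ E) {g : E → F} (hg : Continuous g)
    (hper : ∀ v ∈ AddSubgroup.closure (range b), ∀ z, g (z + v) = g z) :
    IsBounded (range g) := by
  have := Fintype.ofFinite ι
  have := Module.Finite.of_basis b
  have hK : IsCompact (closure (ZSpan.fundamentalDomain b)) :=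
    (ZSpan.fundamentalDomain_isBounded b).isCompact_closure
  refine (hK.image hg).isBounded.subset ?_
  rintro - ⟨z, rfl⟩
  have hfloor : (ZSpan.floor b z : E) ∈ AddSubgroup.closure (range b) := by
    rw [← Submodule.span_int_eq_addSubgroupClosure]
    exact (ZSpan.floor b z).2
  refine ⟨ZSpan.fract b z, subset_closure (ZSpan.fract_mem_fundamentalDomain b z), ?_⟩
  rw [← hper _ hfloor, ZSpan.fract_apply, sub_add_cancel]

theorem Differentiable.apply_eq_apply_of_periodic {E F ι : Type*} [NormedAddCommGroup E]
    [NormedSpace ℂ E] [NormedAddCommGroup F] [NormedSpace ℂ F] [Finite ι]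
    (b : Module.Basis ι ℝ E) {f : E → F} (hf : Differentiable ℂ f)
    (hper : ∀ v ∈ AddSubgroup.closure (range b), ∀ z, f (z + v) = f z) (z w : E) :
    f z = f w :=
  hf.apply_eq_apply_of_bounded (isBounded_range_of_periodic b hf.continuous hper) z w

theorem Differentiable.add_sub_eq_of_periodic_sub {E F ι : Type*} [NormedAddCommGroup E]
    [NormedSpace ℂ E] [NormedAddCommGroup F] [NormedSpace ℂ F] [Finite ι]
    (b : Module.Basis ι ℝ E) {f : E → F} (hf : Differentiable ℂ f)
    (hper : ∀ v ∈ AddSubgroup.closure (range b), ∀ z w, f (z + v) - f z = f (w + v) - f w)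
    (u z : E) : f (z + u) - f z = f u - f 0 := by
  have hdiff : Differentiable ℂ fun z ↦ f (z + u) - f z :=
    (hf.comp (differentiable_id.add_const u)).sub hf
  refine (hdiff.apply_eq_apply_of_periodic b (fun v hv z ↦ ?_) z 0).trans (by rw [zero_add])
  have := hper v hv (z + u) z
  rw [add_right_comm] at this
  rwa [sub_eq_sub_iff_sub_eq_sub]

theorem Differentiable.apply_eq_fderiv_zero_add {𝕜 E F : Type*} [RCLike 𝕜]
    [NormedAddCommGroup E] [NormedSpace 𝕜 E] [NormedAddCommGroup F] [NormedSpace 𝕜 F]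
    {f : E → F} (hf : Differentiable 𝕜 f) (hadd : ∀ u z, f (z + u) - f z = f u - f 0) (z : E) :
    f z = fderiv 𝕜 f 0 z + f 0 := by
  have hconst : ∀ x, fderiv 𝕜 f x = fderiv 𝕜 f 0 := fun x ↦ by
    have hshift : (fun u ↦ f (x + u)) = fun u ↦ (f x - f 0) + f u := by
      funext u; rw [sub_eq_iff_eq_add.mp (hadd u x)]; abel
    have := congrArg (fderiv 𝕜 · 0) hshift
    simpa only [fderiv_comp_add_left, add_zero, fderiv_const_add] using this
  have := is_const_of_fderiv_eq_zero (hf.sub (fderiv 𝕜 f 0).differentiable)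
    (fun x ↦ by rw [fderiv_sub (hf x) (fderiv 𝕜 f 0).differentiableAt, hconst,
      ContinuousLinearMap.fderiv, sub_self]) z 0
  simp only [Pi.sub_apply, map_zero, sub_zero] at this
  exact eq_add_of_sub_eq' this

/-- `λ ↦ λ_τ = λ · (τ, 1)ᵗ`. -/
noncomputable def periodMap (τ : ℂ) : Matrix (Fin 2) (Fin 2) ℝ →ₗ[ℝ] ℂ × ℂ where
  toFun m := ((m 0 0 : ℂ) * τ + (m 0 1 : ℂ), (m 1 0 : ℂ) * τ + (m 1 1 : ℂ))
  map_add' a b := by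
    simp only [Matrix.add_apply, Complex.ofReal_add, Prod.mk_add_mk]
    ring_nf
  map_smul' r a := by
    simp only [Matrix.smul_apply, smul_eq_mul, Complex.ofReal_mul, RingHom.id_apply,
      Prod.smul_mk, Complex.real_smul]
    ring_nf

theorem periodMap_injective {τ : ℂ} (hτ : τ.im ≠ 0) : Function.Injective (periodMap τ) := by
  refine (injective_iff_map_eq_zero _).2 fun m hm ↦ ?_
  simp [periodMap, Prod.ext_iff, Complex.ext_iff, hτ] at hm
  obtain ⟨⟨h₀₁, h₀₀⟩, h₁₁, h₁₀⟩ := hm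
  ext i j
  fin_cases i <;> fin_cases j <;> simp_all

noncomputable def translationCocycle (c₁ c₂ : ℂ) : Matrix (Fin 2) (Fin 2) ℝ →ₗ[ℝ] ℂ where
  toFun m := -(m 0 0 : ℂ) * c₁ - (m 1 0 : ℂ) * c₂
  map_add' a b := by
    simp only [Matrix.add_apply, Complex.ofReal_add]
    ring
  map_smul' r a := by
    simp only [Matrix.smul_apply, smul_eq_mul, Complex.ofReal_mul, RingHom.id_apply,
      Complex.real_smul]
    ring

section
variable {l : Fin 4 → Matrix (Fin 2) (Fin 2) ℝ} (hli : LinearIndependent ℝ l) {τ : ℂ}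
  (hτ : τ.im ≠ 0)

noncomputable def periodBasis : Module.Basis (Fin 4) ℝ (ℂ × ℂ) :=
  basisOfLinearIndependentOfCardEqFinrank
    (hli.map' _ (LinearMap.ker_eq_bot.2 (periodMap_injective hτ)))
    (by simp [Module.finrank_prod, Complex.finrank_real_complex])

theorem coe_periodBasis : ⇑(periodBasis hli hτ) = periodMap τ ∘ l :=
  coe_basisOfLinearIndependentOfCardEqFinrank _ _

theorem exists_periodMap_eq_of_mem_closure {v : ℂ × ℂ}
    (hv : v ∈ AddSubgroup.closure (range (periodBasis hli hτ))) :
    ∃ m ∈ AddSubgroup.closure (range l), periodMap τ m = v := by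
  rwa [coe_periodBasis, range_comp, ← LinearMap.toAddMonoidHom_coe,
    ← AddMonoidHom.map_closure, AddSubgroup.mem_map] at hv

include hli in
theorem comp_periodMap_eq_of_linearIndependent {A : ℂ × ℂ →L[ℂ] ℂ} {c₁ c₂ : ℂ}
    (h : ∀ i, A (periodMap τ (l i)) = translationCocycle c₁ c₂ (l i)) :
    (A.restrictScalars ℝ : ℂ × ℂ →ₗ[ℝ] ℂ) ∘ₗ periodMap τ = translationCocycle c₁ c₂ :=
  LinearMap.ext_on (hli.span_eq_top_of_card_eq_finrank (by simp [Module.finrank_matrix]))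
    (by rintro _ ⟨i, rfl⟩; exact h i)
end

theorem eq_zero_of_comp_periodMap_eq {τ : ℂ} {A : ℂ × ℂ →L[ℂ] ℂ} {c₁ c₂ : ℂ}
    (h : (A.restrictScalars ℝ : ℂ × ℂ →ₗ[ℝ] ℂ) ∘ₗ periodMap τ = translationCocycle c₁ c₂) :
    c₁ = 0 ∧ c₂ = 0 ∧ A = 0 := by
  have h' (m) : A (periodMap τ m) = -(m 0 0 : ℂ) * c₁ - (m 1 0 : ℂ) * c₂ :=
    LinearMap.congr_fun h m
  have e₁ : A (1, 0) = 0 := by simpa [periodMap] using h' (Matrix.single 0 1 1)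
  have e₂ : A (0, 1) = 0 := by simpa [periodMap] using h' (Matrix.single 1 1 1)
  have e₃ : A (τ, 0) = -c₁ := by simpa [periodMap] using h' (Matrix.single 0 0 1)
  have e₄ : A (0, τ) = -c₂ := by simpa [periodMap] using h' (Matrix.single 1 0 1)
  have hτ₁ : A (τ, 0) = 0 := by
    rw [show ((τ, 0) : ℂ × ℂ) = τ • (1, 0) by simp, map_smul, e₁, smul_zero]
  have hτ₂ : A (0, τ) = 0 := by
    rw [show ((0, τ) : ℂ × ℂ) = τ • (0, 1) by simp, map_smul, e₂, smul_zero]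
  refine ⟨neg_eq_zero.1 (e₃.symm.trans hτ₁), neg_eq_zero.1 (e₄.symm.trans hτ₂), ?_⟩
  ext1 <;> apply ContinuousLinearMap.ext_ring <;> simpa

theorem equivariant_sections_of_fiber
    (l : Fin 4 → Matrix (Fin 2) (Fin 2) ℝ)
    (hli : LinearIndependent ℝ l)
    (τ : ℂ) (hτ : 0 < τ.im)
    (f₁ f₂ f₃ : ℂ × ℂ → ℂ)
    (hf₁ : Differentiable ℂ f₁) (hf₂ : Differentiable ℂ f₂) (hf₃ : Differentiable ℂ f₃)
    (hper : ∀ m ∈ AddSubgroup.closure (Set.range l), ∀ z : ℂ × ℂ,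
      f₁ (z + ((m 0 0 : ℂ) * τ + (m 0 1 : ℂ), (m 1 0 : ℂ) * τ + (m 1 1 : ℂ))) = f₁ z ∧
      f₂ (z + ((m 0 0 : ℂ) * τ + (m 0 1 : ℂ), (m 1 0 : ℂ) * τ + (m 1 1 : ℂ))) = f₂ z ∧
      f₃ (z + ((m 0 0 : ℂ) * τ + (m 0 1 : ℂ), (m 1 0 : ℂ) * τ + (m 1 1 : ℂ)))
        = -(m 0 0 : ℂ) * f₁ z - (m 1 0 : ℂ) * f₂ z + f₃ z) :
    (∀ z, f₁ z = 0) ∧ (∀ z, f₂ z = 0) ∧ ∃ b : ℂ, ∀ z, f₃ z = b := by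
  have hper' : ∀ m ∈ AddSubgroup.closure (range l), ∀ z,
      f₁ (z + periodMap τ m) = f₁ z ∧ f₂ (z + periodMap τ m) = f₂ z ∧
      f₃ (z + periodMap τ m) = translationCocycle (f₁ z) (f₂ z) m + f₃ z := hper
  set b := periodBasis hli hτ.ne'
  have hlattice : ∀ v ∈ AddSubgroup.closure (range b),
      ∃ m ∈ AddSubgroup.closure (range l), periodMap τ m = v :=
    fun v ↦ exists_periodMap_eq_of_mem_closure hli hτ.ne'
  have hc₁ : ∀ z w, f₁ z = f₁ w := hf₁.apply_eq_apply_of_periodic b fun v hv z ↦ by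
    obtain ⟨m, hm, rfl⟩ := hlattice v hv
    exact (hper' m hm z).1
  have hc₂ : ∀ z w, f₂ z = f₂ w := hf₂.apply_eq_apply_of_periodic b fun v hv z ↦ by
    obtain ⟨m, hm, rfl⟩ := hlattice v hv
    exact (hper' m hm z).2.1
  set A := fderiv ℂ f₃ 0
  have hA : ∀ z, f₃ z = A z + f₃ 0 := hf₃.apply_eq_fderiv_zero_add <|
    hf₃.add_sub_eq_of_periodic_sub b fun v hv z w ↦ by
      obtain ⟨m, hm, rfl⟩ := hlattice v hv
      rw [(hper' m hm z).2.2, (hper' m hm w).2.2, hc₁ z w, hc₂ z w, add_sub_cancel_right,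
        add_sub_cancel_right]
  have hgen : ∀ i, A (periodMap τ (l i)) = translationCocycle (f₁ 0) (f₂ 0) (l i) := fun i ↦ by
    have := (hper' (l i) (AddSubgroup.subset_closure (mem_range_self i)) 0).2.2
    rw [zero_add, hA] at this
    exact add_right_cancel this
  obtain ⟨h₁, h₂, hA₀⟩ :=
    eq_zero_of_comp_periodMap_eq (comp_periodMap_eq_of_linearIndependent hli hgen)
  refine ⟨fun z ↦ (hc₁ z 0).trans h₁, fun z ↦ (hc₂ z 0).trans h₂, f₃ 0, fun z ↦ ?_⟩
  rw [hA z, hA₀, zero_apply, zero_add]
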